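/- arXiv:math/0503343 — 3 statements merged into one kernel-verified Lean document; each statement's English description precedes it below -/
import Mathlib

section
/- Let W : X → [0,1] be measurable with Σ_{r(y)=x} W(y) = 1 for all x ∈ X. Then there exists a unique family (P_x)_{x∈X} of Borel probability measures, with P_x supported on Ω_x, such that P_x assigns to each cylinder set {(z_1, z_2, …) ∈ Ω_x : z_1 = a_1, …, z_n = a_n} (for (a_1, …, a_n) an admissible initial segment of a path in Ω_x) the value ∏_{k=1}^n W(a_k); moreover this family satisfies, for every measurable E ⊂ X_∞ and every x ∈ X, Σ_{r(y)=x} W(y) P_y(Ω_y ∩ r̂⁻¹(E)) = P_x(Ω_x ∩ E). -/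
open MeasureTheory Filter Topology ENNReal

noncomputable section

abbrev Solenoid {X : Type*} (r : X → X) : Type _ :=
  {z : ℤ → X // ∀ n : ℤ, r (z (n + 1)) = z n}

/-- The shift automorphism `r̂` on the solenoid, `(r̂ z) n = z (n-1)`. -/
def shiftHat {X : Type*} (r : X → X) (z : Solenoid r) : Solenoid r :=
  ⟨fun n => z.1 (n - 1), fun n => by
    have h := z.2 (n - 1)
    have h1 : n - 1 + 1 = n := by ring
    rw [h1] at h
    show r (z.1 (n + 1 - 1)) = z.1 (n - 1)
    have h2 : n + 1 - 1 = n := by ring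
    rw [h2]
    exact h⟩

/-- The inverse of the shift automorphism `r̂`. -/
def shiftHatInv {X : Type*} (r : X → X) (z : Solenoid r) : Solenoid r :=
  ⟨fun n => z.1 (n + 1), fun n => z.2 (n + 1)⟩

/-- Integer powers `r̂^n` of the shift automorphism. -/
def shiftHatZ {X : Type*} (r : X → X) : ℤ → Solenoid r → Solenoid r
  | Int.ofNat n => (shiftHat r)^[n]
  | Int.negSucc n => (shiftHatInv r)^[n + 1]

/-- The function `𝔠(z) = #r⁻¹(r(z₀))` on the solenoid. -/
def cFun {X : Type*} (r : X → X) (z : Solenoid r) : ℝ :=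
  Nat.card (r ⁻¹' {r (z.1 0)})

/-- The cocycle `𝔠⁽ⁿ⁾`: `𝔠⁽⁰⁾ = 1`, `𝔠⁽ⁿ⁾ = 𝔠 ⋯ (𝔠∘r̂^{n-1})` for `n ≥ 1`, and
`𝔠⁽⁻ⁿ⁾ = 1/((𝔠∘r̂⁻¹) ⋯ (𝔠∘r̂⁻ⁿ))` for `n ≥ 1`. -/
def cPow {X : Type*} (r : X → X) : ℤ → Solenoid r → ℝ
  | Int.ofNat n => fun z => ∏ k ∈ Finset.range n, cFun r (shiftHatZ r (k : ℤ) z)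
  | Int.negSucc n => fun z =>
      (∏ k ∈ Finset.range (n + 1), cFun r (shiftHatZ r (-(k + 1) : ℤ) z))⁻¹

/-- The set `N_C(x)` of paths starting at `x` converging to the cycle `C = {xc i}`. -/
def NC {X : Type*} [TopologicalSpace X] (r : X → X) {p : ℕ} (xc : ZMod p → X) (x : X) :
    Set (Solenoid r) :=
  {z | z.1 0 = x ∧ ∃ i : ZMod p, Tendsto (fun n : ℕ => z.1 ((p : ℤ) * (n : ℤ))) atTop (𝓝 (xc i))}

/-- Admissibility of a finite word `(a 1, …, a n)` as an initial segment of a path in `Ω_x`. -/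
def cylOK {X : Type*} (r : X → X) (x : X) (n : ℕ) (a : Fin n → X) : Prop :=
  (∀ h : 0 < n, r (a ⟨0, h⟩) = x) ∧
  ∀ (j : ℕ) (hj : j + 1 < n), r (a ⟨j + 1, hj⟩) = a ⟨j, by omega⟩

/-- The cylinder set `{(z₁, z₂, …) ∈ Ω_x : z₁ = a 1, …, z_n = a n}`. -/
def cylSet {X : Type*} (r : X → X) (x : X) (n : ℕ) (a : Fin n → X) : Set (Solenoid r) :=
  {ω | ω.1 0 = x ∧ ∀ j : Fin n, ω.1 ((j : ℕ) + 1) = a j}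

/-- A family `(P x)` of Borel probability measures supported on `Ω_x`, assigning to each
admissible cylinder the product of the `W`-values of its letters. -/
def IsPathMeasureFamily {X : Type*} [MeasurableSpace X] (r : X → X) (W : X → ℝ≥0∞)
    (P : X → MeasureTheory.Measure (Solenoid r)) : Prop :=
  (∀ x, MeasureTheory.IsProbabilityMeasure (P x)) ∧
  (∀ x, P x {ω : Solenoid r | ω.1 0 = x} = 1) ∧
  (∀ (x : X) (n : ℕ) (a : Fin n → X), cylOK r x n a →
    P x (cylSet r x n a) = ∏ j : Fin n, W (a j))

/-!
Existence: choose independently, for every time `k` and every point `y`, a preimage of `y`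
with law `W` on `r⁻¹(y)`. Starting at `a₀ = x` and following these choices gives a random path;
it begins with an admissible word `a₁, …, aₙ` exactly when the choice made at `(k, a_k)` is
`a_{k+1}` for every `k < n`. These are `n` distinct independent coordinates, so the probability
is `∏ W(a_k)`.

Uniqueness: on `Ω_x` every coordinate takes only countably many values, and each value of
`(z₁, …, zₙ)` is a cylinder. Hence every measurable set agrees on `Ω_x` with a set generated by
the cylinders, and the π-λ theorem applies to measures carried by `Ω_x`.

The shift identity then follows from uniqueness: `A ↦ ∑_{r(y)=x} W(y) P_y(r̂⁻¹ A)` is a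
probability measure carried by `Ω_x` that gives every cylinder the same mass as `P_x`.
-/

/-- The set `Ω_x` of paths through `x`. -/
abbrev pathsFrom {X : Type*} (r : X → X) (x : X) : Set (Solenoid r) := {z | z.1 0 = x}

namespace Solenoid

variable {X : Type*} {r : X → X}

lemma apply_sub_one (z : Solenoid r) (m : ℤ) : z.1 (m - 1) = r (z.1 m) := by
  simpa using (z.2 (m - 1)).symm

lemma apply_neg_natCast (z : Solenoid r) (k : ℕ) : z.1 (-k) = r^[k] (z.1 0) := by
  induction k with
  | zero => simp
  | succ k ih =>
    rw [Function.iterate_succ_apply', ← ih, ← apply_sub_one z]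
    exact congrArg z.1 (by push_cast; ring)

def ofNat (p : ℕ → X) (hp : ∀ k, r (p (k + 1)) = p k) : Solenoid r :=
  ⟨fun m => r^[(-m).toNat] (p m.toNat), fun m => by
    dsimp only
    rcases le_or_gt 0 m with hm | hm
    · rw [show (-(m + 1)).toNat = 0 by omega, show (-m).toNat = 0 by omega,
        show (m + 1).toNat = m.toNat + 1 by omega]
      exact hp _
    · rw [show (m + 1).toNat = m.toNat by omega, show (-m).toNat = (-(m + 1)).toNat + 1 by omega,
        Function.iterate_succ_apply']⟩

lemma ofNat_apply_natCast (p : ℕ → X) (hp : ∀ k, r (p (k + 1)) = p k) (k : ℕ) :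
    (ofNat p hp).1 k = p k := by
  simp [ofNat]

def word (n : ℕ) (z : Solenoid r) : Fin n → X := fun j => z.1 (j + 1)

variable [MeasurableSpace X]

lemma measurable_apply (m : ℤ) : Measurable fun z : Solenoid r => z.1 m :=
  (measurable_pi_apply m).comp measurable_subtype_coe

lemma measurable_shiftHat : Measurable (shiftHat r) :=
  (measurable_pi_lambda _ fun m => measurable_apply (m - 1)).subtype_mk

end Solenoid

section Cylinder

variable {X : Type*} {r : X → X}

def cylSets (r : X → X) (x : X) : Set (Set (Solenoid r)) := {s | ∃ n a, s = cylSet r x n a}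

lemma cylOK_of_mem_cylSet {x : X} {n : ℕ} {a : Fin n → X} {z : Solenoid r}
    (hz : z ∈ cylSet r x n a) : cylOK r x n a := by
  obtain ⟨hz0, hza⟩ := hz
  refine ⟨fun hn => ?_, fun j hj => ?_⟩
  · rw [← hza ⟨0, hn⟩, ← hz0, ← Solenoid.apply_sub_one z]
    simp
  · rw [← hza, ← hza, ← Solenoid.apply_sub_one z]
    exact congrArg z.1 (by push_cast; ring)

lemma cylSet_eq_empty {x : X} {n : ℕ} {a : Fin n → X} (ha : ¬ cylOK r x n a) :
    cylSet r x n a = ∅ :=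
  Set.eq_empty_of_forall_notMem fun _ hz => ha (cylOK_of_mem_cylSet hz)

lemma cylSet_zero (x : X) (a : Fin 0 → X) : cylSet r x 0 a = pathsFrom r x := by
  simp [cylSet]

lemma cylSet_subset_cylSet {x : X} {m n : ℕ} (hmn : m ≤ n) {a : Fin m → X} {b : Fin n → X}
    (hab : (cylSet r x m a ∩ cylSet r x n b).Nonempty) : cylSet r x n b ⊆ cylSet r x m a := by
  obtain ⟨z, hza, hzb⟩ := hab
  intro w hw
  refine ⟨hw.1, fun j => ?_⟩
  have hwj := hw.2 (Fin.castLE hmn j)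
  have hzj := hzb.2 (Fin.castLE hmn j)
  rw [← hza.2 j]
  simp_all

lemma isPiSystem_cylSets (x : X) : IsPiSystem (cylSets r x) := by
  rintro _ ⟨m, a, rfl⟩ _ ⟨n, b, rfl⟩ hab
  rcases le_total m n with hmn | hnm
  · exact ⟨n, b, Set.inter_eq_right.2 (cylSet_subset_cylSet hmn hab)⟩
  · exact ⟨m, a, Set.inter_eq_left.2 (cylSet_subset_cylSet hnm (Set.inter_comm _ _ ▸ hab))⟩

lemma countable_preimage_iterate (hc : ∀ x, (r ⁻¹' {x}).Countable) (k : ℕ) (x : X) :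
    (r^[k] ⁻¹' {x}).Countable := by
  induction k generalizing x with
  | zero => simp
  | succ k ih =>
    rw [Function.iterate_succ, Set.preimage_comp, ← Set.biUnion_preimage_singleton r]
    exact (ih x).biUnion fun y _ => hc y

lemma cylOK.iterate_apply {x : X} {n : ℕ} {a : Fin n → X} (ha : cylOK r x n a) (j : Fin n) :
    r^[j + 1] (a j) = x := by
  obtain ⟨j, hj⟩ := j
  induction j with
  | zero => exact ha.1 hj
  | succ j ih => rw [Function.iterate_succ_apply, ha.2 j hj, ih]

lemma cylOK.apply_eq_cons {x : X} {n : ℕ} {a : Fin n → X} (ha : cylOK r x n a) (j : Fin n) :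
    r (a j) = (Fin.cons x a : Fin (n + 1) → X) j.castSucc := by
  obtain ⟨_ | k, hk⟩ := j
  · exact ha.1 hk
  · exact ha.2 k hk

lemma cylOK.tail {x : X} {n : ℕ} {a : Fin (n + 1) → X} (ha : cylOK r x (n + 1) a) :
    cylOK r (a 0) n (Fin.tail a) :=
  ⟨fun _ => ha.2 0 (by omega), fun j hj => ha.2 (j + 1) (by omega)⟩

lemma countable_setOf_cylOK (hc : ∀ x, (r ⁻¹' {x}).Countable) (x : X) (n : ℕ) :
    {a : Fin n → X | cylOK r x n a}.Countable :=
  (Set.countable_pi fun j : Fin n => countable_preimage_iterate hc (j + 1) x).mono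
    fun _ ha j => ha.iterate_apply j

lemma pathsFrom_inter_preimage_word (x : X) (n : ℕ) (V : Set (Fin n → X)) :
    pathsFrom r x ∩ Solenoid.word n ⁻¹' V = ⋃ a ∈ V ∩ {a | cylOK r x n a}, cylSet r x n a := by
  ext z
  simp only [Set.mem_inter_iff, Set.mem_preimage, Set.mem_iUnion, Set.mem_ofPred_eq, exists_prop]
  constructor
  · rintro ⟨hz0, hzV⟩
    have hz : z ∈ cylSet r x n (Solenoid.word n z) := ⟨hz0, fun _ => rfl⟩
    exact ⟨_, ⟨hzV, cylOK_of_mem_cylSet hz⟩, hz⟩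
  · rintro ⟨a, ⟨haV, -⟩, hz0, hza⟩
    exact ⟨hz0, (funext hza : Solenoid.word n z = a) ▸ haV⟩

lemma exists_pathsFrom_inter_preimage_apply (x : X) (m : ℤ) (B : Set X) :
    ∃ n V, pathsFrom r x ∩ (fun z => z.1 m) ⁻¹' B = pathsFrom r x ∩ Solenoid.word n ⁻¹' V := by
  rcases le_or_gt m 0 with hm | hm
  · refine ⟨0, {_a | r^[(-m).toNat] x ∈ B}, ?_⟩
    ext z
    simp only [Set.mem_inter_iff, Set.mem_ofPred_eq, Set.mem_preimage, and_congr_right_iff]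
    rintro rfl
    rw [← Solenoid.apply_neg_natCast, Int.toNat_of_nonneg (by omega), neg_neg]
  · obtain ⟨n, rfl⟩ : ∃ n : ℕ, m = n + 1 := ⟨m.toNat - 1, by omega⟩
    refine ⟨n + 1, {a | a (Fin.last n) ∈ B}, ?_⟩
    ext z
    simp [Solenoid.word]

lemma pathsFrom_inter_shiftHat_preimage_cylSet {x : X} {n : ℕ} {a : Fin (n + 1) → X}
    (ha : r (a 0) = x) :
    pathsFrom r (a 0) ∩ shiftHat r ⁻¹' cylSet r x (n + 1) a = cylSet r (a 0) n (Fin.tail a) := by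
  ext z
  simp only [cylSet, Set.mem_inter_iff, Set.mem_preimage, Set.mem_ofPred_eq, shiftHat,
    Fin.forall_fin_succ, Fin.val_zero, Fin.val_succ, Nat.cast_zero, Nat.cast_succ, zero_add,
    add_sub_cancel_right, Fin.tail]
  exact ⟨fun ⟨h0, _, _, h⟩ => ⟨h0, h⟩,
    fun ⟨h0, h⟩ => ⟨h0, by rw [Solenoid.apply_sub_one, h0, ha], h0, h⟩⟩

lemma pathsFrom_inter_shiftHat_preimage_cylSet_of_ne {x y : X} {n : ℕ} {a : Fin (n + 1) → X}
    (hy : a 0 ≠ y) : pathsFrom r y ∩ shiftHat r ⁻¹' cylSet r x (n + 1) a = ∅ := by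
  ext z
  simp only [cylSet, Set.mem_inter_iff, Set.mem_preimage, Set.mem_ofPred_eq, shiftHat,
    Fin.forall_fin_succ, Fin.val_zero, Nat.cast_zero, zero_add, add_sub_cancel_right,
    Set.mem_empty_iff_false, iff_false]
  exact fun ⟨h0, _, h0', _⟩ => hy (h0'.symm.trans h0)

end Cylinder

section Uniqueness

variable {X : Type*} [MeasurableSpace X] [MeasurableSingletonClass X] {r : X → X}

lemma measurableSet_setOf_apply_eq (m : ℤ) (x : X) :
    MeasurableSet {z : Solenoid r | z.1 m = x} :=
  Solenoid.measurable_apply m (measurableSet_singleton x)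

lemma measurableSet_cylSet (x : X) (n : ℕ) (a : Fin n → X) : MeasurableSet (cylSet r x n a) := by
  have : cylSet r x n a = pathsFrom r x ∩ ⋂ j : Fin n, {z : Solenoid r | z.1 (j + 1) = a j} := by
    ext
    simp [cylSet]
  rw [this]
  exact (measurableSet_setOf_apply_eq 0 x).inter
    (.iInter fun j => measurableSet_setOf_apply_eq _ _)

lemma isPiSystem_cylSets_union_disjoint (x : X) :
    IsPiSystem (cylSets r x ∪ {s | MeasurableSet s ∧ Disjoint s (pathsFrom r x)}) := by
  rintro s (hs | ⟨hsm, hsx⟩) t (ht | ⟨htm, htx⟩) hst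
  · exact Or.inl (isPiSystem_cylSets x s hs t ht hst)
  · obtain ⟨n, a, rfl⟩ := hs
    exact Or.inr ⟨(measurableSet_cylSet x n a).inter htm, htx.mono_left Set.inter_subset_right⟩
  · obtain ⟨n, a, rfl⟩ := ht
    exact Or.inr ⟨hsm.inter (measurableSet_cylSet x n a), hsx.mono_left Set.inter_subset_left⟩
  · exact Or.inr ⟨hsm.inter htm, hsx.mono_left Set.inter_subset_left⟩

lemma measurableSpace_eq_generateFrom_cylSets_union_disjoint
    (hc : ∀ x, (r ⁻¹' {x}).Countable) (x : X) :
    (inferInstance : MeasurableSpace (Solenoid r)) = MeasurableSpace.generateFrom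
      (cylSets r x ∪ {s | MeasurableSet s ∧ Disjoint s (pathsFrom r x)}) := by
  refine le_antisymm ?_ (MeasurableSpace.generateFrom_le ?_)
  · refine Measurable.comap_le
      ((@measurable_pi_iff _ _ _ (MeasurableSpace.generateFrom _) _ _).2 fun m B hB => ?_)
    rw [← Set.inter_union_sdiff ((fun z : Solenoid r => z.1 m) ⁻¹' B) (pathsFrom r x)]
    refine .union ?_ (MeasurableSpace.measurableSet_generateFrom (Or.inr
      ⟨(Solenoid.measurable_apply m hB).diff (measurableSet_setOf_apply_eq 0 x),
        Set.disjoint_sdiff_left⟩))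
    obtain ⟨n, V, hV⟩ := exists_pathsFrom_inter_preimage_apply x m B
    rw [Set.inter_comm, hV, pathsFrom_inter_preimage_word]
    exact .biUnion ((countable_setOf_cylOK hc x n).mono Set.inter_subset_right)
      fun a _ => MeasurableSpace.measurableSet_generateFrom (Or.inl ⟨n, a, rfl⟩)
  · rintro s (⟨n, a, rfl⟩ | ⟨hs, -⟩)
    exacts [measurableSet_cylSet x n a, hs]

theorem ext_of_cylSet (hc : ∀ x, (r ⁻¹' {x}).Countable) {x : X}
    {μ ν : Measure (Solenoid r)} [IsProbabilityMeasure μ] [IsProbabilityMeasure ν]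
    (hμ : μ (pathsFrom r x) = 1) (hν : ν (pathsFrom r x) = 1)
    (h : ∀ n a, cylOK r x n a → μ (cylSet r x n a) = ν (cylSet r x n a)) : μ = ν := by
  have hμ0 := (prob_compl_eq_zero_iff (measurableSet_setOf_apply_eq 0 x)).2 hμ
  have hν0 := (prob_compl_eq_zero_iff (measurableSet_setOf_apply_eq 0 x)).2 hν
  refine ext_of_generate_finite _ (measurableSpace_eq_generateFrom_cylSets_union_disjoint hc x)
    (isPiSystem_cylSets_union_disjoint x) ?_ (by simp)
  rintro s (⟨n, a, rfl⟩ | ⟨-, hs⟩)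
  · by_cases ha : cylOK r x n a
    · exact h n a ha
    · simp [cylSet_eq_empty ha]
  · rw [measure_mono_null hs.subset_compl_right hμ0, measure_mono_null hs.subset_compl_right hν0]

end Uniqueness

lemma measurable_of_mem_countable {α β : Type*} [MeasurableSpace α] [MeasurableSpace β]
    {f : α → β} {s : Set β} (hs : s.Countable) (hf : ∀ a, f a ∈ s)
    (h : ∀ y ∈ s, MeasurableSet (f ⁻¹' {y})) : Measurable f := by
  have := hs.to_subtype
  refine measurable_subtype_coe.comp (f := Set.codRestrict f s hf)
    (measurable_to_countable' fun y => ?_)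
  convert h y y.2 using 1
  ext a
  simp [Subtype.ext_iff]

section Walk

variable {X : Type*} {r : X → X} {W : X → ℝ≥0∞}

def fiberPMF (hW : ∀ x, ∑' y : r ⁻¹' {x}, W y.1 = 1) (x : X) : PMF (r ⁻¹' {x}) :=
  ⟨fun y => W y, hW x ▸ ENNReal.summable.hasSum⟩

/-- A path may visit the same point several times, so a fresh preimage is chosen at each time. -/
abbrev Choices (r : X → X) := ∀ i : ℕ × X, r ⁻¹' {i.2}

def walk (x : X) (ω : Choices r) : ℕ → X
  | 0 => x
  | k + 1 => ω (k, walk x ω k)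

lemma walk_succ (x : X) (ω : Choices r) (k : ℕ) : r (walk x ω (k + 1)) = walk x ω k :=
  (ω (k, walk x ω k)).2

lemma iterate_walk (x : X) (ω : Choices r) (k : ℕ) : r^[k] (walk x ω k) = x := by
  induction k with
  | zero => rfl
  | succ k ih => rw [Function.iterate_succ_apply, walk_succ x ω k, ih]

lemma walk_eq_iff (x : X) (ω : Choices r) {n : ℕ} (a : Fin n → X) :
    (∀ j : Fin n, walk x ω (j + 1) = a j) ↔
      ∀ j : Fin n, (ω (j, (Fin.cons x a : Fin (n + 1) → X) j.castSucc) : X) = a j := by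
  have follows (h : ∀ j : Fin n, walk x ω (j + 1) = a j) (j : Fin (n + 1)) :
      walk x ω j = (Fin.cons x a : Fin (n + 1) → X) j := Fin.cases rfl h j
  refine ⟨fun h j => ?_, fun h => ?_⟩
  · rw [← h j, ← follows h j.castSucc]
    rfl
  · suffices ∀ j : Fin (n + 1), walk x ω j = (Fin.cons x a : Fin (n + 1) → X) j from
      fun j => this j.succ
    refine Fin.induction rfl fun j hj => ?_
    rw [Fin.cons_succ, ← h j, ← hj]
    rfl

def walkPath (x : X) (ω : Choices r) : Solenoid r := Solenoid.ofNat (walk x ω) (walk_succ x ω)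

lemma walkPath_apply_zero (x : X) (ω : Choices r) : (walkPath x ω).1 0 = x := rfl

lemma preimage_walkPath_cylSet (x : X) (n : ℕ) (a : Fin n → X) :
    walkPath x ⁻¹' cylSet r x n a = {ω | ∀ j : Fin n, walk x ω (j + 1) = a j} := by
  ext ω
  simp only [cylSet, Set.mem_preimage, Set.mem_ofPred_eq, walkPath_apply_zero, true_and]
  refine forall_congr' fun j => ?_
  rw [← Nat.cast_succ, walkPath, Solenoid.ofNat_apply_natCast]

end Walk

section Construction

variable {X : Type*} [MeasurableSpace X] [MeasurableSingletonClass X] {r : X → X}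
  {W : X → ℝ≥0∞}

lemma fiberPMF_toMeasure_setOf_val_eq (hW : ∀ x, ∑' y : r ⁻¹' {x}, W y.1 = 1) {x y : X}
    (hy : r y = x) : (fiberPMF hW x).toMeasure {v | (v : X) = y} = W y := by
  have : {v : r ⁻¹' {x} | (v : X) = y} = {⟨y, hy⟩} := by
    ext v
    simp [Subtype.ext_iff]
  rw [this, PMF.toMeasure_apply_singleton _ _ (measurableSet_singleton _)]
  rfl

def choicesMeasure (hW : ∀ x, ∑' y : r ⁻¹' {x}, W y.1 = 1) : Measure (Choices r) :=
  Measure.infinitePi fun i => (fiberPMF hW i.2).toMeasure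

instance (hW : ∀ x, ∑' y : r ⁻¹' {x}, W y.1 = 1) :
    IsProbabilityMeasure (choicesMeasure hW) := by
  unfold choicesMeasure
  infer_instance

lemma measurableSet_walk_eq (hc : ∀ x, (r ⁻¹' {x}).Countable) (x : X) (k : ℕ) (y : X) :
    MeasurableSet {ω : Choices r | walk x ω k = y} := by
  induction k generalizing y with
  | zero => exact .const (x = y)
  | succ k ih =>
    have : {ω : Choices r | walk x ω (k + 1) = y} = ⋃ b ∈ r^[k] ⁻¹' {x},
        {ω | walk x ω k = b} ∩ {ω : Choices r | (ω (k, b) : X) = y} := by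
      ext ω
      simp only [Set.mem_ofPred_eq, Set.mem_iUnion, Set.mem_inter_iff, exists_prop]
      constructor
      · exact fun h => ⟨walk x ω k, iterate_walk x ω k, rfl, h⟩
      · rintro ⟨_, -, rfl, h⟩
        exact h
    rw [this]
    exact .biUnion (countable_preimage_iterate hc k x) fun b _ => (ih b).inter
      (measurable_subtype_coe.comp (measurable_pi_apply _) (measurableSet_singleton y))

lemma measurable_walk (hc : ∀ x, (r ⁻¹' {x}).Countable) (x : X) (k : ℕ) :
    Measurable fun ω : Choices r => walk x ω k :=
  measurable_of_mem_countable (countable_preimage_iterate hc k x) (iterate_walk x · k)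
    fun y _ => measurableSet_walk_eq hc x k y

lemma measurable_walkPath (hc : ∀ x, (r ⁻¹' {x}).Countable) (x : X) :
    Measurable (walkPath (r := r) x) := by
  refine (measurable_pi_lambda _ fun m => ?_).subtype_mk
  rcases le_or_gt 0 m with hm | hm
  · simpa [walkPath, Solenoid.ofNat, Int.toNat_eq_zero.2 (by omega : -m ≤ 0)]
      using measurable_walk hc x m.toNat
  · simp [Int.toNat_eq_zero.2 (by omega : m ≤ 0), walk]

def pathMeasure (hW : ∀ x, ∑' y : r ⁻¹' {x}, W y.1 = 1) (x : X) : Measure (Solenoid r) :=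
  (choicesMeasure hW).map (walkPath x)

theorem pathMeasure_cylSet (hc : ∀ x, (r ⁻¹' {x}).Countable)
    (hW : ∀ x, ∑' y : r ⁻¹' {x}, W y.1 = 1) {x : X} {n : ℕ} {a : Fin n → X}
    (ha : cylOK r x n a) : pathMeasure hW x (cylSet r x n a) = ∏ j, W (a j) := by
  classical
  let e : Fin n → ℕ × X := fun j => (j, (Fin.cons x a : Fin (n + 1) → X) j.castSucc)
  have he : e.Injective := fun i j h => Fin.ext (congrArg Prod.fst h)
  let t : (i : ℕ × X) → Set (r ⁻¹' {i.2}) :=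
    fun i => {v | (v : X) = if h : i.1 < n then a ⟨i.1, h⟩ else x}
  have hpre : walkPath x ⁻¹' cylSet r x n a = Set.pi (Finset.univ.image e) t := by
    rw [preimage_walkPath_cylSet]
    ext ω
    simp [walk_eq_iff, t, e]
  rw [pathMeasure, Measure.map_apply (measurable_walkPath hc x) (measurableSet_cylSet x n a), hpre,
    choicesMeasure, Measure.infinitePi_pi, Finset.prod_image he.injOn]
  · refine Finset.prod_congr rfl fun j _ => ?_
    simp only [t, e, dif_pos j.2]
    exact fiberPMF_toMeasure_setOf_val_eq hW (ha.apply_eq_cons j)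
  · exact fun i _ => measurable_subtype_coe (measurableSet_singleton _)

theorem isPathMeasureFamily_pathMeasure (hc : ∀ x, (r ⁻¹' {x}).Countable)
    (hW : ∀ x, ∑' y : r ⁻¹' {x}, W y.1 = 1) : IsPathMeasureFamily r W (pathMeasure hW) := by
  refine ⟨fun x => Measure.isProbabilityMeasure_map (measurable_walkPath hc x).aemeasurable,
    fun x => ?_, fun x n a => pathMeasure_cylSet hc hW⟩
  rw [pathMeasure, Measure.map_apply (measurable_walkPath hc x) (measurableSet_setOf_apply_eq 0 x)]
  simp [walkPath_apply_zero]

end Construction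

namespace IsPathMeasureFamily

variable {X : Type*} [MeasurableSpace X] [MeasurableSingletonClass X] {r : X → X}
  {W : X → ℝ≥0∞} {P Q : X → Measure (Solenoid r)}

theorem eq (hc : ∀ x, (r ⁻¹' {x}).Countable)
    (hP : IsPathMeasureFamily r W P) (hQ : IsPathMeasureFamily r W Q) : P = Q := by
  funext x
  have := hP.1 x
  have := hQ.1 x
  exact ext_of_cylSet hc (hP.2.1 x) (hQ.2.1 x) fun n a ha =>
    (hP.2.2 x n a ha).trans (hQ.2.2 x n a ha).symm

theorem tsum_mul_pathsFrom_inter_shiftHat_preimage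
    (hc : ∀ x, (r ⁻¹' {x}).Countable) (hW : ∀ x, ∑' y : r ⁻¹' {x}, W y.1 = 1)
    (hP : IsPathMeasureFamily r W P) {E : Set (Solenoid r)} (hE : MeasurableSet E) (x : X) :
    ∑' y : r ⁻¹' {x}, W y.1 * P y.1 (pathsFrom r y.1 ∩ shiftHat r ⁻¹' E) =
      P x (pathsFrom r x ∩ E) := by
  have := hP.1
  have hfrom (y : X) (A : Set (Solenoid r)) : P y (pathsFrom r y ∩ A) = P y A := by
    rw [Set.inter_comm, measure_inter_conull
      ((prob_compl_eq_zero_iff (measurableSet_setOf_apply_eq 0 y)).2 (hP.2.1 y))]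
  let ν : Measure (Solenoid r) := Measure.sum fun y : r ⁻¹' {x} => W y • (P y).map (shiftHat r)
  have hν (A : Set (Solenoid r)) (hA : MeasurableSet A) :
      ν A = ∑' y : r ⁻¹' {x}, W y * P y (pathsFrom r y ∩ shiftHat r ⁻¹' A) := by
    simp only [ν, Measure.sum_apply _ hA, Measure.smul_apply,
      Measure.map_apply Solenoid.measurable_shiftHat hA, hfrom, smul_eq_mul]
  have hν_from : ν (pathsFrom r x) = 1 := by
    rw [hν _ (measurableSet_setOf_apply_eq 0 x), ← hW x]
    refine tsum_congr fun y => ?_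
    rw [Set.inter_eq_left.2 fun z hz => ?_, hP.2.1 y, mul_one]
    show z.1 (0 - 1) = x
    rw [Solenoid.apply_sub_one, hz]
    exact y.2
  have : IsProbabilityMeasure ν := ⟨by simp [hν _ .univ, hP.2.1, hW x]⟩
  have hνP : ν = P x := by
    refine ext_of_cylSet hc hν_from (hP.2.1 x) fun n a ha => ?_
    rcases n with _ | n
    · rw [cylSet_zero, hν_from, hP.2.1 x]
    rw [hν _ (measurableSet_cylSet x _ a), hP.2.2 x _ a ha, Fin.prod_univ_succ,
      tsum_eq_single ⟨a 0, ha.1 n.succ_pos⟩]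
    · dsimp only
      rw [pathsFrom_inter_shiftHat_preimage_cylSet (ha.1 n.succ_pos), hP.2.2 _ _ _ ha.tail]
      rfl
    · intro y hy
      rw [pathsFrom_inter_shiftHat_preimage_cylSet_of_ne fun h => hy (Subtype.ext h.symm),
        measure_empty, mul_zero]
  rw [← hν E hE, hνP, hfrom]

end IsPathMeasureFamily

theorem statement7_general
    {X : Type*} [MetricSpace X] [MeasurableSpace X] [BorelSpace X]
    (r : X → X)
    (hfin : ∀ x : X, (r ⁻¹' {x}).Finite)
    (W : X → ℝ≥0∞)
    (hWsum : ∀ x : X, ∑' y : r ⁻¹' {x}, W y.1 = 1) :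
    (∃! P : X → Measure (Solenoid r), IsPathMeasureFamily r W P) ∧
    (∀ P : X → Measure (Solenoid r), IsPathMeasureFamily r W P →
      ∀ E : Set (Solenoid r), MeasurableSet E → ∀ x : X,
        ∑' y : r ⁻¹' {x},
            W y.1 * P y.1 ({ω : Solenoid r | ω.1 0 = y.1} ∩ shiftHat r ⁻¹' E)
          = P x ({ω : Solenoid r | ω.1 0 = x} ∩ E)) := by
  have hc : ∀ x, (r ⁻¹' {x}).Countable := fun x => (hfin x).countable
  have hfam := isPathMeasureFamily_pathMeasure hc hWsum
  exact ⟨⟨pathMeasure hWsum, hfam, fun P hP => hP.eq hc hfam⟩,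
    fun P hP E hE x => hP.tsum_mul_pathsFrom_inter_shiftHat_preimage hc hWsum hE x⟩

theorem statement7
    {X : Type*} [MetricSpace X] [CompactSpace X] [MeasurableSpace X] [BorelSpace X]
    (r : X → X) (hr : Measurable r)
    (hfin : ∀ x : X, (r ⁻¹' {x}).Finite) (hne : ∀ x : X, (r ⁻¹' {x}).Nonempty)
    (W : X → ℝ≥0∞) (hWm : Measurable W) (hW1 : ∀ x, W x ≤ 1)
    (hWsum : ∀ x : X, ∑' y : r ⁻¹' {x}, W y.1 = 1) :
    (∃! P : X → Measure (Solenoid r), IsPathMeasureFamily r W P) ∧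
    (∀ P : X → Measure (Solenoid r), IsPathMeasureFamily r W P →
      ∀ E : Set (Solenoid r), MeasurableSet E → ∀ x : X,
        ∑' y : r ⁻¹' {x},
            W y.1 * P y.1 ({ω : Solenoid r | ω.1 0 = y.1} ∩ shiftHat r ⁻¹' E)
          = P x ({ω : Solenoid r | ω.1 0 = x} ∩ E)) :=
  statement7_general r hfin W hWsum
end
end

section
/- For the golden mean shift X(A) with A = [[1,1],[1,0]], let m_0 : X(A) → ℂ be the function with m_0(x) = √2 if x begins with the word 11, m_0(x) = 0 if x begins with 21, and m_0(x) = 1 if x begins with 12, and let C be the cycle {(111…)} (a fixed point of the shift r), with α_0 = 1. Then m_0 satisfies the quadrature condition (1/#r⁻¹(x)) Σ_{r(y)=x} |m_0(y)|² = 1 for all x ∈ X(A) and the low-pass condition m_0(111…) = √(#r⁻¹(r(111…))) = √2; moreover, for W(y) = |m_0(y)|²/#r⁻¹(r(y)), the harmonic function h_C(x) = Σ_{ω∈N_C(x)} ∏_{k≥1} W(z_k) of the cycle C is identically 1 on X(A). -/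
open MeasureTheory Filter Topology ENNReal

noncomputable section

/-- The golden mean shift space: sequences over the alphabet `{1, 2}` (encoded as
`false = 1`, `true = 2`) with the word `22` forbidden (transition matrix `[[1,1],[1,0]]`). -/
abbrev GMpt : Type := {x : ℕ → Bool // ∀ i : ℕ, ¬(x i = true ∧ x (i + 1) = true)}

/-- The one-sided shift `r` on the golden mean shift space. -/
def gmShift (x : GMpt) : GMpt := ⟨fun i => x.1 (i + 1), fun i => x.2 (i + 1)⟩

/-- The fixed point `111… ` of the shift. -/
def gmOne : GMpt := ⟨fun _ => false, by simp⟩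

/-- The filter `m₀`:  `m₀(11…) = √2`, `m₀(21…) = 0`, `m₀(12…) = 1`. -/
def gmM0 (x : GMpt) : ℂ :=
  if x.1 0 = false ∧ x.1 1 = false then ((Real.sqrt 2 : ℝ) : ℂ)
  else if x.1 0 = true then 0 else 1

namespace GMaux

/-- prepend `false` -/
def pre0 (x : GMpt) : GMpt :=
  ⟨fun i => match i with | 0 => false | (j+1) => x.1 j, by
    intro i hi
    match i, hi with
    | 0, hi => exact absurd hi.1 (by simp)
    | (j+1), hi => exact x.2 j hi⟩

/-- prepend `true` (needs `x 0 = false`) -/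
def pre1 (x : GMpt) (h : x.1 0 = false) : GMpt :=
  ⟨fun i => match i with | 0 => true | (j+1) => x.1 j, by
    intro i hi
    match i, hi with
    | 0, hi => simp only [] at hi; exact absurd (hi.2.symm.trans h) (by simp)
    | (j+1), hi => exact x.2 j hi⟩

@[simp] lemma pre0_zero (x : GMpt) : (pre0 x).1 0 = false := rfl
@[simp] lemma pre0_succ (x : GMpt) (j : ℕ) : (pre0 x).1 (j+1) = x.1 j := rfl
@[simp] lemma pre1_zero (x : GMpt) (h) : (pre1 x h).1 0 = true := rfl
@[simp] lemma pre1_succ (x : GMpt) (h) (j : ℕ) : (pre1 x h).1 (j+1) = x.1 j := rfl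

@[simp] lemma shift_pre0 (x : GMpt) : gmShift (pre0 x) = x :=
  Subtype.ext (funext fun _ => rfl)

@[simp] lemma shift_pre1 (x : GMpt) (h) : gmShift (pre1 x h) = x :=
  Subtype.ext (funext fun _ => rfl)

lemma shift_val {x y : GMpt} (h : gmShift y = x) (j : ℕ) : y.1 (j+1) = x.1 j :=
  congrFun (congrArg Subtype.val h) j

lemma eq_pre0 {x y : GMpt} (hs : gmShift y = x) (h0 : y.1 0 = false) : y = pre0 x := by
  refine Subtype.ext (funext fun i => ?_)
  match i with
  | 0 => exact h0
  | (j+1) => exact shift_val hs j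

lemma eq_pre1 {x y : GMpt} (hs : gmShift y = x) (h0 : y.1 0 = true) (h) : y = pre1 x h := by
  refine Subtype.ext (funext fun i => ?_)
  match i with
  | 0 => exact h0
  | (j+1) => exact shift_val hs j

lemma preimage_true (x : GMpt) (h : x.1 0 = true) :
    gmShift ⁻¹' {x} = {pre0 x} := by
  ext y
  simp only [Set.mem_preimage, Set.mem_singleton_iff]
  constructor
  · intro hy
    have h1 : y.1 1 = true := (shift_val hy 0).trans h
    have h0 : y.1 0 = false := by
      cases h0 : y.1 0
      · rfl
      · exact absurd ⟨h0, h1⟩ (y.2 0)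
    exact eq_pre0 hy h0
  · rintro rfl; exact shift_pre0 x

lemma preimage_false (x : GMpt) (h : x.1 0 = false) :
    gmShift ⁻¹' {x} = {pre0 x, pre1 x h} := by
  ext y
  simp only [Set.mem_preimage, Set.mem_singleton_iff, Set.mem_insert_iff]
  constructor
  · intro hy
    cases h0 : y.1 0
    · exact Or.inl (eq_pre0 hy h0)
    · exact Or.inr (eq_pre1 hy h0 h)
  · rintro (rfl | rfl)
    · exact shift_pre0 x
    · exact shift_pre1 x h

lemma pre0_ne_pre1 (x : GMpt) (h) : pre0 x ≠ pre1 x h := by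
  intro he
  have : (pre0 x).1 0 = (pre1 x h).1 0 := by rw [he]
  simp at this

lemma card_preimage_false (x : GMpt) (h : x.1 0 = false) :
    Nat.card (gmShift ⁻¹' {x}) = 2 := by
  rw [preimage_false x h, Nat.card_coe_set_eq, Set.ncard_pair (pre0_ne_pre1 x h)]

lemma card_preimage_true (x : GMpt) (h : x.1 0 = true) :
    Nat.card (gmShift ⁻¹' {x}) = 1 := by
  rw [preimage_true x h, Nat.card_coe_set_eq, Set.ncard_singleton]

lemma gmM0_ff {y : GMpt} (h0 : y.1 0 = false) (h1 : y.1 1 = false) :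
    gmM0 y = ((Real.sqrt 2 : ℝ) : ℂ) := by simp [gmM0, h0, h1]

lemma gmM0_ft {y : GMpt} (h0 : y.1 0 = false) (h1 : y.1 1 = true) :
    gmM0 y = 1 := by simp [gmM0, h0, h1]

lemma gmM0_t {y : GMpt} (h0 : y.1 0 = true) : gmM0 y = 0 := by simp [gmM0, h0]

lemma norm_sq_sqrt2 : ‖((Real.sqrt 2 : ℝ) : ℂ)‖ ^ 2 = 2 := by
  rw [Complex.norm_real, Real.norm_eq_abs, abs_of_nonneg (Real.sqrt_nonneg 2),
    Real.sq_sqrt (by norm_num)]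

/-- W(y) = 1 whenever y starts with `false`. -/
lemma W_eq_one (y : GMpt) (h : y.1 0 = false) :
    ‖gmM0 y‖ ^ 2 / (Nat.card (gmShift ⁻¹' {gmShift y}) : ℝ) = 1 := by
  have hs0 : (gmShift y).1 0 = y.1 1 := rfl
  cases h1 : y.1 1
  · rw [card_preimage_false _ (hs0.trans h1), gmM0_ff h h1, norm_sq_sqrt2]
    norm_num
  · rw [card_preimage_true _ (hs0.trans h1), gmM0_ft h h1]
    norm_num

lemma W_eq_zero (y : GMpt) (h : y.1 0 = true) :
    ‖gmM0 y‖ ^ 2 / (Nat.card (gmShift ⁻¹' {gmShift y}) : ℝ) = 0 := by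
  rw [gmM0_t h]; simp

end GMaux

namespace GMaux

lemma pre0_iter_val (x : GMpt) : ∀ n i : ℕ, i < n → (pre0^[n] x).1 i = false := by
  intro n
  induction n with
  | zero => intro i hi; omega
  | succ m ih =>
    intro i hi
    rw [Function.iterate_succ_apply']
    match i with
    | 0 => rfl
    | (j+1) => exact ih j (by omega)

/-- the path `z_n = 0^n x` as a function `ℤ → GMpt`. -/
def zfun (x : GMpt) (n : ℤ) : GMpt :=
  if 0 ≤ n then pre0^[n.toNat] x else gmShift^[(-n).toNat] x

lemma zfun_ofNat (x : GMpt) (m : ℕ) : zfun x (m : ℤ) = pre0^[m] x := by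
  simp [zfun]

lemma zfun_neg (x : GMpt) (m : ℕ) : zfun x (-(m : ℤ)) = gmShift^[m] x := by
  match m with
  | 0 => simp [zfun]
  | (k+1) =>
    have h : ¬ (0 : ℤ) ≤ -((k+1 : ℕ) : ℤ) := by omega
    rw [zfun, if_neg h]
    norm_num

lemma zfun_zero (x : GMpt) : zfun x 0 = x := zfun_ofNat x 0

lemma zfun_sol (x : GMpt) : ∀ n : ℤ, gmShift (zfun x (n + 1)) = zfun x n := by
  intro n
  rcases n with m | m
  · show gmShift (zfun x ((m : ℤ) + 1)) = zfun x (m : ℤ)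
    have : ((m : ℤ) + 1) = ((m + 1 : ℕ) : ℤ) := by push_cast; ring
    rw [this, zfun_ofNat, zfun_ofNat, Function.iterate_succ_apply', shift_pre0]
  · show gmShift (zfun x (-((m+1 : ℕ) : ℤ) + 1)) = zfun x (-((m+1 : ℕ) : ℤ))
    have : (-((m+1 : ℕ) : ℤ) + 1) = -((m : ℕ) : ℤ) := by push_cast; ring
    rw [this, zfun_neg, zfun_neg, Function.iterate_succ_apply']

def omegaStar (x : GMpt) : Solenoid gmShift := ⟨zfun x, zfun_sol x⟩

lemma tendsto_pre0_iter (x : GMpt) :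
    Tendsto (fun n : ℕ => pre0^[n] x) atTop (𝓝 gmOne) := by
  rw [tendsto_subtype_rng]
  rw [tendsto_pi_nhds]
  intro i
  apply Tendsto.congr' (f₁ := fun _ => false)
  · filter_upwards [eventually_ge_atTop (i+1)] with n hn
    exact (pre0_iter_val x n i (by omega)).symm
  · exact tendsto_const_nhds

lemma omegaStar_mem (x : GMpt) : omegaStar x ∈ NC gmShift (fun _ : ZMod 1 => gmOne) x := by
  refine ⟨zfun_zero x, 0, ?_⟩
  have h : ∀ n : ℕ, (omegaStar x).1 (((1:ℕ) : ℤ) * (n : ℤ)) = pre0^[n] x := by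
    intro n
    show zfun x (((1:ℕ) : ℤ) * (n : ℤ)) = _
    rw [show (((1:ℕ) : ℤ) * (n : ℤ)) = ((n : ℕ) : ℤ) by push_cast; ring, zfun_ofNat]
  exact Tendsto.congr (fun n => (h n).symm) (tendsto_pre0_iter x)

/-- uniqueness: a solenoid path starting at x whose forward coordinates all start
with `false` is `omegaStar x`. -/
lemma eq_omegaStar (x : GMpt) (b : Solenoid gmShift) (hz : b.1 0 = x)
    (hall : ∀ k : ℕ, (b.1 ((k : ℤ) + 1)).1 0 = false) : b = omegaStar x := by
  have hpos : ∀ m : ℕ, b.1 (m : ℤ) = pre0^[m] x := by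
    intro m
    induction m with
    | zero => exact hz
    | succ k ih =>
      have hsol := b.2 (k : ℤ)
      rw [ih] at hsol
      have h0 := hall k
      have : b.1 ((k : ℤ) + 1) = pre0 (pre0^[k] x) := eq_pre0 hsol h0
      rw [show ((k+1 : ℕ) : ℤ) = (k : ℤ) + 1 by push_cast; ring, this,
        ← Function.iterate_succ_apply' pre0 k x]
  have hneg : ∀ m : ℕ, b.1 (-(m : ℤ)) = gmShift^[m] x := by
    intro m
    induction m with
    | zero => exact hz
    | succ k ih =>
      have hsol := b.2 (-((k+1 : ℕ) : ℤ))
      rw [show (-((k+1 : ℕ) : ℤ) + 1) = -((k : ℕ) : ℤ) by push_cast; ring, ih] at hsol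
      rw [← hsol, Function.iterate_succ_apply']
  refine Subtype.ext (funext fun n => ?_)
  rcases n with m | m
  · show b.1 (m : ℤ) = zfun x (m : ℤ)
    rw [hpos, zfun_ofNat]
  · show b.1 (-((m+1 : ℕ) : ℤ)) = zfun x (-((m+1 : ℕ) : ℤ))
    rw [hneg, zfun_neg]

lemma tprod_eq_zero {f : ℕ → ℝ} (k : ℕ) (h : f k = 0) : ∏' n, f n = 0 := by
  have hp : HasProd f 0 := by
    rw [HasProd]
    apply Tendsto.congr' (f₁ := fun _ => (0:ℝ))
    · filter_upwards [eventually_ge_atTop ({k} : Finset ℕ)] with s hs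
      exact (Finset.prod_eq_zero (hs (Finset.mem_singleton_self k)) h).symm
    · exact tendsto_const_nhds
  exact hp.tprod_eq

end GMaux

open GMaux in
theorem statement14 :
    (∀ x : GMpt,
      (Nat.card (gmShift ⁻¹' {x}) : ℝ)⁻¹ * ∑' y : gmShift ⁻¹' {x}, ‖gmM0 y.1‖ ^ 2 = 1) ∧
    (gmM0 gmOne = ((Real.sqrt (Nat.card (gmShift ⁻¹' {gmShift gmOne})) : ℝ) : ℂ) ∧
      gmM0 gmOne = ((Real.sqrt 2 : ℝ) : ℂ)) ∧
    (∀ x : GMpt, ∑' ω : NC gmShift (fun _ : ZMod 1 => gmOne) x,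
        ∏' k : ℕ, ‖gmM0 (ω.1.1 ((k : ℤ) + 1))‖ ^ 2 /
          (Nat.card (gmShift ⁻¹' {gmShift (ω.1.1 ((k : ℤ) + 1))}) : ℝ) = 1) := by
  refine ⟨?_, ⟨?_, gmM0_ff rfl rfl⟩, ?_⟩
  · intro x
    cases hx : x.1 0
    · rw [preimage_false x hx, Nat.card_coe_set_eq, Set.ncard_pair (pre0_ne_pre1 x hx)]
      rw [tsum_eq_single (⟨pre0 x, Or.inl rfl⟩ : ({pre0 x, pre1 x hx} : Set GMpt))
        (by
          rintro ⟨b, (rfl | rfl)⟩ hb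
          · exact absurd rfl hb
          · simp [gmM0_t (pre1_zero x hx)])]
      have : gmM0 (pre0 x) = ((Real.sqrt 2 : ℝ) : ℂ) := gmM0_ff rfl hx
      rw [this, norm_sq_sqrt2]
      norm_num
    · rw [preimage_true x hx, Nat.card_coe_set_eq, Set.ncard_singleton,
        tsum_singleton (pre0 x) (fun y => ‖gmM0 y‖ ^ 2)]
      have : gmM0 (pre0 x) = 1 := gmM0_ft rfl hx
      rw [this]
      norm_num
  · have h1 : gmShift gmOne = gmOne := Subtype.ext rfl
    rw [h1, card_preimage_false gmOne rfl, gmM0_ff rfl rfl]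
    norm_num
  · intro x
    have hvan : ∀ b : NC gmShift (fun _ : ZMod 1 => gmOne) x,
        b ≠ (⟨omegaStar x, omegaStar_mem x⟩ : NC gmShift (fun _ : ZMod 1 => gmOne) x) →
        ∏' k : ℕ, ‖gmM0 (b.1.1 ((k : ℤ) + 1))‖ ^ 2 /
          (Nat.card (gmShift ⁻¹' {gmShift (b.1.1 ((k : ℤ) + 1))}) : ℝ) = 0 := by
      intro b hb
      have hnot : ¬ ∀ k : ℕ, (b.1.1 ((k : ℤ) + 1)).1 0 = false := fun hall =>
        hb (Subtype.ext (eq_omegaStar x b.1 b.2.1 hall))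
      obtain ⟨k, hk⟩ := not_forall.mp hnot
      have hk' : (b.1.1 ((k : ℤ) + 1)).1 0 = true := by
        cases h : (b.1.1 ((k : ℤ) + 1)).1 0
        · exact absurd h hk
        · rfl
      exact tprod_eq_zero k (W_eq_zero _ hk')
    rw [tsum_eq_single (⟨omegaStar x, omegaStar_mem x⟩ :
      NC gmShift (fun _ : ZMod 1 => gmOne) x) hvan]
    have hval : ∀ k : ℕ, (omegaStar x).1 ((k : ℤ) + 1) = pre0^[k+1] x := by
      intro k
      show zfun x ((k : ℤ) + 1) = _
      rw [show ((k : ℤ) + 1) = ((k + 1 : ℕ) : ℤ) by push_cast; ring, zfun_ofNat]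
    rw [tprod_congr (g := fun _ : ℕ => (1 : ℝ)) (fun k => by
      rw [hval k]
      exact W_eq_one _ (pre0_iter_val x (k+1) 0 (by omega)))]
    exact tprod_one
end
end

section
/- Let V ≥ 0 be measurable with Σ_{r(y)=x} V(y) = 1 for all x ∈ X, and let ν be a Perron–Frobenius measure for R_V. Then for every n ≥ 1 the operator E_n^V defined on L¹(X, ν) by E_n^V(f)(x) = Σ_{r^n(y)=r^n(x)} V^{(n)}(y) f(y) is a version of the conditional expectation of f with respect to the sub-sigma-algebra r^{-n}(𝔅): for every f ∈ L¹(X, ν), E_n^V(f) is r^{-n}(𝔅)-measurable and ∫ E_n^V(f) g dν = ∫ f g dν for all bounded r^{-n}(𝔅)-measurable g. -/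
/-!
Write `Sₙ h z = ∑_{rⁿ y = z} V⁽ⁿ⁾(y) h(y)`, so that `Eₙ^V f = Sₙ f ∘ rⁿ`. Since
`V⁽ⁿ⁺¹⁾(y) = V⁽ⁿ⁾(r y) V(y)`, grouping the fiber of `rⁿ⁺¹` according to `r` gives
`Sₙ₊₁ = Sₙ ∘ R_V`; hence `Sₙ` preserves `ν`-integrals, `Sₙ 1 = 1` and
`Sₙ (h · G ∘ rⁿ) = Sₙ h · G`. Applied to `h = 1_A ∘ rⁿ` this shows that `rⁿ` preserves `ν`, and
an `r⁻ⁿ(𝔅)`-measurable `g` is `G ∘ rⁿ` for a Borel `G` (Doob–Dynkin), so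
`∫ Eₙ^V f · g = ∫ (Sₙ f · G) ∘ rⁿ = ∫ Sₙ f · G = ∫ Sₙ (f g) = ∫ f g`.

The remaining point is that `Sₙ f` is Borel. For `h ≥ 0` and an upper set `S ⊆ ℝ`, the set
`{Sₙ h ∈ S}` is the projection of the Borel set of injective tuples in a fiber whose partial sum
lies in `S`, hence analytic. For `|h| ≤ M`, applying this to `M ± h` makes both `{a < Sₙ h}` and
its complement analytic, so they are Borel by Suslin's theorem; general `h` are handled by
clamping, which on each finite fiber is eventually exact.
-/

open MeasureTheory Filter Topology ENNReal

noncomputable section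

/-- `r` is averaging w.r.t. `ν`: every function in `L¹(ν)` which is measurable with respect to
`𝔅_∞ = ⋂ₙ r⁻ⁿ(𝔅)` is `ν`-a.e. constant. -/
def Averaging {X : Type*} [MeasurableSpace X] (r : X → X)
    (ν : MeasureTheory.Measure X) : Prop :=
  ∀ g : X → ℝ,
    Measurable[⨅ n : ℕ, MeasurableSpace.comap (r^[n]) inferInstance] g →
    MeasureTheory.Integrable g ν → ∃ c : ℝ, g =ᵐ[ν] fun _ => c

/-- The operator `Eₙ^V f (x) = Σ_{rⁿ y = rⁿ x} V⁽ⁿ⁾(y) f(y)`,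
where `V⁽ⁿ⁾(y) = V(y) V(r y) ⋯ V(r^{n-1} y)`. -/
def EV {X : Type*} (r : X → X) (V : X → ℝ) (n : ℕ) (f : X → ℝ) (x : X) : ℝ :=
  ∑' y : (r^[n]) ⁻¹' {r^[n] x}, (∏ k ∈ Finset.range n, V (r^[k] y.1)) * f y.1

open Set

/-- `fiberSum r V` is the Ruelle operator `R_V`, and `Sₙ = fiberSum (r^[n]) (iterWeight r V n)`. -/
def fiberSum {X Y : Type*} (q : X → Y) (W g : X → ℝ) (z : Y) : ℝ :=
  ∑' y : q ⁻¹' {z}, W y * g y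

section FiberSum

variable {X Y Z : Type*} {q : X → Y} {W g h : X → ℝ} {z : Y}

theorem fiberSum_eq_sum (hz : (q ⁻¹' {z}).Finite) :
    fiberSum q W g z = ∑ y ∈ hz.toFinset, W y * g y := by
  rw [← Finset.tsum_subtype', hz.coe_toFinset]
  rfl

theorem fiberSum_congr (hgh : ∀ y, q y = z → g y = h y) :
    fiberSum q W g z = fiberSum q W h z :=
  tsum_congr fun y => by rw [hgh y y.2]

theorem fiberSum_mul_comp (G : Y → ℝ) :
    fiberSum q W (fun y => g y * G (q y)) z = fiberSum q W g z * G z := by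
  simp only [fiberSum, ← tsum_mul_right]
  exact tsum_congr fun y => by rw [y.2, mul_assoc]

theorem fiberSum_comp_of_tsum_eq_one (hW : ∀ z, ∑' y : q ⁻¹' {z}, W y = 1) (G : Y → ℝ) :
    fiberSum q W (G ∘ q) z = G z := by
  simpa [fiberSum, hW z] using fiberSum_mul_comp (q := q) (W := W) (g := 1) (z := z) G

theorem fiberSum_const (hW : ∀ z, ∑' y : q ⁻¹' {z}, W y = 1) (c : ℝ) :
    fiberSum q W (fun _ => c) z = c :=
  fiberSum_comp_of_tsum_eq_one hW fun _ => c

theorem fiberSum_add (hz : (q ⁻¹' {z}).Finite) :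
    fiberSum q W (fun x => g x + h x) z = fiberSum q W g z + fiberSum q W h z := by
  simp only [fiberSum_eq_sum hz, mul_add, Finset.sum_add_distrib]

theorem fiberSum_neg : fiberSum q W (fun x => -g x) z = -fiberSum q W g z := by
  simp only [fiberSum, mul_neg, tsum_neg]

theorem fiberSum_comp {q₁ : X → Y} {q₂ : Y → Z} {W₁ : X → ℝ} {W₂ : Y → ℝ} {z : Z}
    (hq₁ : ∀ y, (q₁ ⁻¹' {y}).Finite) (hz : (q₂ ⁻¹' {z}).Finite) (g : X → ℝ) :
    fiberSum (q₂ ∘ q₁) (fun x => W₂ (q₁ x) * W₁ x) g z =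
      fiberSum q₂ W₂ (fiberSum q₁ W₁ g) z := by
  classical
  have hz' : ((q₂ ∘ q₁) ⁻¹' {z}).Finite := hz.preimage' fun y _ => hq₁ y
  rw [fiberSum_eq_sum hz', fiberSum_eq_sum hz,
    ← Finset.sum_fiberwise_of_maps_to (g := q₁) (t := hz.toFinset) (by simp)]
  refine Finset.sum_congr rfl fun y hy => ?_
  rw [fiberSum_eq_sum (hq₁ y), Finset.mul_sum]
  refine Finset.sum_congr (by ext x; simp_all) fun x hx => ?_
  simp only [Finite.mem_toFinset, mem_preimage, mem_singleton_iff] at hx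
  rw [hx]; ring

theorem sum_le_fiberSum {k : ℕ} {ys : Fin k → X} (hz : (q ⁻¹' {z}).Finite)
    (hinj : Function.Injective ys) (hys : ∀ i, q (ys i) = z) (hWg : ∀ x, 0 ≤ W x * g x) :
    ∑ i, W (ys i) * g (ys i) ≤ fiberSum q W g z := by
  classical
  rw [fiberSum_eq_sum hz, ← Finset.sum_image (f := fun x => W x * g x) (s := Finset.univ)
    fun i _ j _ h => hinj h]
  exact Finset.sum_le_sum_of_subset_of_nonneg (by simpa [Finset.subset_iff] using hys)
    fun x _ _ => hWg x

theorem exists_sum_eq_fiberSum (hz : (q ⁻¹' {z}).Finite) :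
    ∃ (k : ℕ) (ys : Fin k → X), Function.Injective ys ∧ (∀ i, q (ys i) = z) ∧
      ∑ i, W (ys i) * g (ys i) = fiberSum q W g z := by
  let e := hz.toFinset.equivFin
  refine ⟨_, fun i => e.symm i, Subtype.val_injective.comp e.symm.injective,
    fun i => hz.mem_toFinset.1 (e.symm i).2, ?_⟩
  rw [fiberSum_eq_sum hz]
  exact (Equiv.sum_comp e.symm fun x => W x * g x).trans
    (Finset.sum_coe_sort hz.toFinset fun x => W x * g x)

end FiberSum

def iterWeight {X : Type*} (r : X → X) (V : X → ℝ) (n : ℕ) (y : X) : ℝ :=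
  ∏ k ∈ Finset.range n, V (r^[k] y)

section Iterate

variable {X : Type*} {r : X → X} {V : X → ℝ}

theorem EV_eq_fiberSum_comp (n : ℕ) (f : X → ℝ) :
    EV r V n f = fiberSum (r^[n]) (iterWeight r V n) f ∘ r^[n] :=
  rfl

theorem iterWeight_succ (n : ℕ) (y : X) :
    iterWeight r V (n + 1) y = iterWeight r V n (r y) * V y := by
  simp only [iterWeight, Finset.prod_range_succ', Function.iterate_succ_apply,
    Function.iterate_zero_apply]

theorem iterWeight_nonneg (hV : ∀ x, 0 ≤ V x) (n : ℕ) (y : X) : 0 ≤ iterWeight r V n y :=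
  Finset.prod_nonneg fun _ _ => hV _

theorem Measurable.iterWeight [MeasurableSpace X] (hr : Measurable r) (hV : Measurable V)
    (n : ℕ) : Measurable (iterWeight r V n) :=
  Finset.measurable_prod _ fun k _ => hV.comp (hr.iterate k)

theorem finite_preimage_iterate (hfin : ∀ x, (r ⁻¹' {x}).Finite) (n : ℕ) (z : X) :
    (r^[n] ⁻¹' {z}).Finite := by
  induction n generalizing z with
  | zero => simp
  | succ n ih =>
    rw [Function.iterate_succ, preimage_comp]
    exact (ih z).preimage' fun x _ => hfin x

theorem fiberSum_iterate_zero (g : X → ℝ) : fiberSum (r^[0]) (iterWeight r V 0) g = g := by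
  ext z
  simp [fiberSum, iterWeight]

variable (hfin : ∀ x, (r ⁻¹' {x}).Finite)
include hfin

theorem fiberSum_iterate_succ (n : ℕ) (g : X → ℝ) (z : X) :
    fiberSum (r^[n + 1]) (iterWeight r V (n + 1)) g z =
      fiberSum (r^[n]) (iterWeight r V n) (fiberSum r V g) z := by
  rw [Function.iterate_succ, funext (iterWeight_succ n)]
  exact fiberSum_comp hfin (finite_preimage_iterate hfin n z) g

theorem tsum_iterWeight_eq_one (hV : ∀ x, ∑' y : r ⁻¹' {x}, V y = 1) (n : ℕ) (z : X) :
    ∑' y : r^[n] ⁻¹' {z}, iterWeight r V n y = 1 := by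
  induction n generalizing z with
  | zero => simpa [fiberSum] using congrFun (fiberSum_iterate_zero (r := r) (V := V) 1) z
  | succ n ih =>
    have h := fiberSum_iterate_succ hfin (V := V) n 1 z
    simp only [fiberSum, Pi.one_apply, mul_one, hV] at h
    rw [h, ih]

theorem integral_fiberSum_iterate {_ : MeasurableSpace X} {ν : Measure X}
    (hPF : ∀ f : X → ℝ, Integrable f ν →
      Integrable (fiberSum r V f) ν ∧ ∫ x, fiberSum r V f x ∂ν = ∫ x, f x ∂ν)
    (n : ℕ) {f : X → ℝ} (hf : Integrable f ν) :
    Integrable (fiberSum (r^[n]) (iterWeight r V n) f) ν ∧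
      ∫ z, fiberSum (r^[n]) (iterWeight r V n) f z ∂ν = ∫ x, f x ∂ν := by
  induction n generalizing f with
  | zero =>
    rw [fiberSum_iterate_zero]
    exact ⟨hf, rfl⟩
  | succ n ih =>
    rw [funext (fiberSum_iterate_succ hfin n f)]
    obtain ⟨hint, heq⟩ := ih (hPF f hf).1
    exact ⟨hint, heq.trans (hPF f hf).2⟩

end Iterate

theorem measurePreserving_of_integral_fiberSum {X : Type*} [MeasurableSpace X] {q : X → X}
    {W : X → ℝ} {ν : Measure X} [IsFiniteMeasure ν] (hq : Measurable q)
    (hW : ∀ z, ∑' y : q ⁻¹' {z}, W y = 1)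
    (hPF : ∀ f : X → ℝ, Integrable f ν → ∫ x, fiberSum q W f x ∂ν = ∫ x, f x ∂ν) :
    MeasurePreserving q ν ν := by
  refine ⟨hq, Measure.ext fun A hA => ?_⟩
  have hind : A.indicator 1 ∘ q = (q ⁻¹' A).indicator (1 : X → ℝ) :=
    funext fun x => (indicator_comp_right q).symm
  have h := hPF (A.indicator 1 ∘ q) (hind ▸ (integrable_const 1).indicator (hq hA))
  rw [funext fun z => fiberSum_comp_of_tsum_eq_one hW _ (z := z), hind,
    integral_indicator_one hA, integral_indicator_one (hq hA)] at h
  rw [Measure.map_apply hq hA]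
  exact (measureReal_eq_measureReal_iff (measure_ne_top ν _) (measure_ne_top ν _)).1 h.symm

section Measurability

variable {X Y : Type*} [MeasurableSpace X] [StandardBorelSpace X]
  [TopologicalSpace Y] [PolishSpace Y] [MeasurableSpace Y] [BorelSpace Y]
  {q : X → Y} {W g : X → ℝ}

theorem analyticSet_preimage_fiberSum (hq : Measurable q) (hfq : ∀ z, (q ⁻¹' {z}).Finite)
    (hW : Measurable W) (hg : Measurable g) (hWg : ∀ x, 0 ≤ W x * g x)
    {S : Set ℝ} (hS : MeasurableSet S) (hSu : IsUpperSet S) :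
    AnalyticSet (fiberSum q W g ⁻¹' S) := by
  have key : fiberSum q W g ⁻¹' S = ⋃ k : ℕ, Prod.fst ''
      {p : Y × (Fin k → X) | Function.Injective p.2 ∧ (∀ i, q (p.2 i) = p.1) ∧
        ∑ i, W (p.2 i) * g (p.2 i) ∈ S} := by
    ext z
    simp only [mem_preimage, mem_iUnion, mem_image, mem_ofPred_eq, Prod.exists,
      exists_and_right, exists_eq_right]
    constructor
    · intro hzS
      obtain ⟨k, ys, hinj, hys, hsum⟩ := exists_sum_eq_fiberSum (W := W) (g := g) (hfq z)
      exact ⟨k, ys, hinj, hys, hsum ▸ hzS⟩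
    · rintro ⟨k, ys, hinj, hys, hsum⟩
      exact hSu (sum_le_fiberSum (hfq z) hinj hys hWg) hsum
  rw [key]
  refine AnalyticSet.iUnion fun k => MeasurableSet.analyticSet_image ?_ measurable_fst
  unfold Function.Injective
  measurability

variable (hq : Measurable q) (hfq : ∀ z, (q ⁻¹' {z}).Finite) (hWm : Measurable W)
  (hW0 : ∀ x, 0 ≤ W x) (hW1 : ∀ z, ∑' y : q ⁻¹' {z}, W y = 1)
include hq hfq hWm hW0 hW1

theorem measurable_fiberSum_of_abs_le (hg : Measurable g) {M : ℝ} (hgM : ∀ x, |g x| ≤ M) :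
    Measurable (fiberSum q W g) := by
  have hplus (z : Y) : fiberSum q W (fun x => M + g x) z = M + fiberSum q W g z := by
    rw [fiberSum_add (hfq z), fiberSum_const hW1]
  have hminus (z : Y) : fiberSum q W (fun x => M + -g x) z = M - fiberSum q W g z := by
    rw [fiberSum_add (hfq z), fiberSum_const hW1, fiberSum_neg, sub_eq_add_neg]
  refine measurable_of_Ioi fun a => AnalyticSet.measurableSet_of_compl ?_ ?_
  · convert analyticSet_preimage_fiberSum hq hfq hWm (hg.const_add M)
      (fun x => mul_nonneg (hW0 x) (by linarith [neg_abs_le (g x), hgM x]))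
      measurableSet_Ioi (isUpperSet_Ioi (a := M + a)) using 1
    ext z
    simp only [mem_preimage, mem_Ioi, hplus, add_lt_add_iff_left]
  · convert analyticSet_preimage_fiberSum (g := fun x => M + -g x) hq hfq hWm
      (hg.neg.const_add M)
      (fun x => mul_nonneg (hW0 x) (by linarith [le_abs_self (g x), hgM x]))
      measurableSet_Ici (isUpperSet_Ici (a := M - a)) using 1
    ext z
    simp only [mem_compl_iff, mem_preimage, mem_Ioi, not_lt, mem_Ici, hminus,
      _root_.sub_le_sub_iff_left]

theorem measurable_fiberSum (hg : Measurable g) : Measurable (fiberSum q W g) := by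
  let clamp (m : ℕ) (x : X) : ℝ := max (-m) (min (g x) m)
  have hclamp (m : ℕ) : Measurable (fiberSum q W (clamp m)) :=
    measurable_fiberSum_of_abs_le hq hfq hWm hW0 hW1
      (measurable_const.max (hg.min measurable_const))
      fun x => abs_le.2 ⟨le_max_left _ _, max_le (neg_le_self m.cast_nonneg) (min_le_right _ _)⟩
  refine measurable_of_tendsto_metrizable hclamp (tendsto_pi_nhds.2 fun z => ?_)
  obtain ⟨N, hN⟩ := ((hfq z).image fun x => |g x|).bddAbove
  obtain ⟨m₀, hm₀⟩ := exists_nat_ge N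
  refine tendsto_atTop_of_eventually_const (i₀ := m₀) fun m hm => fiberSum_congr fun x hx => ?_
  have hxm : |g x| ≤ m := (hN (mem_image_of_mem _ hx)).trans (hm₀.trans (by exact_mod_cast hm))
  obtain ⟨hlow, hup⟩ := abs_le.1 hxm
  simp only [clamp, min_eq_left hup, max_eq_right hlow]

end Measurability

theorem statement15_general
    {X : Type*} [MetricSpace X] [CompactSpace X] [MeasurableSpace X] [BorelSpace X]
    (r : X → X) (hr : Measurable r)
    (hfin : ∀ x : X, (r ⁻¹' {x}).Finite)
    (V : X → ℝ) (hVm : Measurable V) (hV0 : ∀ x, 0 ≤ V x)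
    (hVsum : ∀ x : X, ∑' y : r ⁻¹' {x}, V y.1 = 1)
    (ν : Measure X) [IsProbabilityMeasure ν]
    (hPF : ∀ f : X → ℝ, Integrable f ν →
      Integrable (fun x => ∑' y : r ⁻¹' {x}, V y.1 * f y.1) ν ∧
      ∫ x, (∑' y : r ⁻¹' {x}, V y.1 * f y.1) ∂ν = ∫ x, f x ∂ν)
    (n : ℕ) (f : X → ℝ) (hfm : Measurable f) (hf : Integrable f ν) :
    Measurable[MeasurableSpace.comap (r^[n]) inferInstance] (EV r V n f) ∧
    ∀ g : X → ℝ, Measurable[MeasurableSpace.comap (r^[n]) inferInstance] g →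
      (∃ M : ℝ, ∀ x, |g x| ≤ M) →
      ∫ x, EV r V n f x * g x ∂ν = ∫ x, f x * g x ∂ν := by
  set S := fiberSum (r^[n]) (iterWeight r V n)
  have hq : Measurable (r^[n]) := hr.iterate n
  have hW1 := tsum_iterWeight_eq_one hfin hVsum n
  have hPFn := fun h (hh : Integrable h ν) => integral_fiberSum_iterate hfin hPF n hh
  have hSf : Measurable (S f) := measurable_fiberSum hq (finite_preimage_iterate hfin n)
    (hr.iterWeight hVm n) (iterWeight_nonneg hV0 n) hW1 hfm
  refine ⟨EV_eq_fiberSum_comp n f ▸ hSf.comp (comap_measurable _), fun g hg ⟨M, hM⟩ => ?_⟩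
  obtain ⟨G, hGm, rfl⟩ := hg.exists_eq_measurable_comp
  have hpres : MeasurePreserving (r^[n]) ν ν :=
    measurePreserving_of_integral_fiberSum hq hW1 fun h hh => (hPFn h hh).2
  have hfg : Integrable (fun x => f x * G (r^[n] x)) ν :=
    hf.mul_bdd (hGm.comp hq).aestronglyMeasurable (.of_forall hM)
  calc ∫ x, EV r V n f x * (G ∘ r^[n]) x ∂ν
      = ∫ x, (fun z => S f z * G z) (r^[n] x) ∂ν := by rw [EV_eq_fiberSum_comp]; rfl
    _ = ∫ z, S f z * G z ∂ν.map (r^[n]) :=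
        (integral_map hq.aemeasurable (hSf.mul hGm).aestronglyMeasurable).symm
    _ = ∫ z, S f z * G z ∂ν := by rw [hpres.map_eq]
    _ = ∫ z, S (fun x => f x * G (r^[n] x)) z ∂ν := by simp_rw [S, fiberSum_mul_comp]
    _ = ∫ x, f x * (G ∘ r^[n]) x ∂ν := (hPFn _ hfg).2

theorem statement15
    {X : Type*} [MetricSpace X] [CompactSpace X] [MeasurableSpace X] [BorelSpace X]
    (r : X → X) (hr : Measurable r)
    (hfin : ∀ x : X, (r ⁻¹' {x}).Finite) (hne : ∀ x : X, (r ⁻¹' {x}).Nonempty)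
    (V : X → ℝ) (hVm : Measurable V) (hV0 : ∀ x, 0 ≤ V x)
    (hVsum : ∀ x : X, ∑' y : r ⁻¹' {x}, V y.1 = 1)
    (ν : Measure X) [IsProbabilityMeasure ν]
    (hPF : ∀ f : X → ℝ, Integrable f ν →
      Integrable (fun x => ∑' y : r ⁻¹' {x}, V y.1 * f y.1) ν ∧
      ∫ x, (∑' y : r ⁻¹' {x}, V y.1 * f y.1) ∂ν = ∫ x, f x ∂ν)
    (n : ℕ) (hn : 1 ≤ n) (f : X → ℝ) (hfm : Measurable f) (hf : Integrable f ν) :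
    Measurable[MeasurableSpace.comap (r^[n]) inferInstance] (EV r V n f) ∧
    ∀ g : X → ℝ, Measurable[MeasurableSpace.comap (r^[n]) inferInstance] g →
      (∃ M : ℝ, ∀ x, |g x| ≤ M) →
      ∫ x, EV r V n f x * g x ∂ν = ∫ x, f x * g x ∂ν :=
  statement15_general r hr hfin V hVm hV0 hVsum ν hPF n f hfm hf
end
end
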